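/- arXiv:1104.0119 — 2 statements merged into one kernel-verified Lean document; each statement's English description precedes it below -/
import Mathlib

section
/- Fix a prime p and ν ≥ 1. Let F ∈ ℤ_p⟦T⟧ be a formal power series with zero constant term such that for every m ≥ 1 with p ∤ m, the coefficient of T^m in F is divisible by p (i.e. F ∈ 𝒜⁰₁ = ℤ_p⟦T^p⟧ + p·ℤ_p⟦T⟧). Let F^{∘ν} denote the ν-fold composite F ∘ F ∘ … ∘ F (substitution of F into itself ν times, well defined since F has zero constant term). Then for every m ≥ 1, p^{max(ν − v_p(m), 0)} divides the coefficient of T^m in F^{∘ν}; that is, F^{∘ν} ∈ 𝒜⁰_ν = ℤ_p⟦T^{p^ν}⟧ + p·ℤ_p⟦T^{p^{ν−1}}⟧ + … + p^ν·ℤ_p⟦T⟧. -/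
/-- Composition `G ∘ F` of formal power series, valid when `F` has zero constant term:
the `m`-th coefficient is `Σ_{k ≤ m} (coeff k G) · (coeff m (F^k))` (for `F` with zero
constant term, `coeff m (F^k) = 0` for `k > m`, so this agrees with substitution of `F`
into `G`). -/
noncomputable def PScomp (p : ℕ) [Fact p.Prime] (G F : PowerSeries ℤ_[p]) :
    PowerSeries ℤ_[p] :=
  PowerSeries.mk fun m => ∑ k ∈ Finset.range (m + 1),
    PowerSeries.coeff k G * PowerSeries.coeff m (F ^ k)

/-- The ν-fold composite `F^{∘ν} = F ∘ F ∘ … ∘ F`, with `F^{∘0} = T` (the identity). -/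
noncomputable def iterComp (p : ℕ) [Fact p.Prime] (F : PowerSeries ℤ_[p]) :
    ℕ → PowerSeries ℤ_[p]
  | 0 => PowerSeries.X
  | n + 1 => PScomp p F (iterComp p F n)


open PowerSeries Finset

variable {p : ℕ} [Fact p.Prime]

lemma coeff_pow_p_zmod (p : ℕ) [Fact p.Prime] (g : PowerSeries (ZMod p)) (m : ℕ) :
    PowerSeries.coeff m (g ^ p) =
      if p ∣ m then PowerSeries.coeff (m / p) g else 0 := by
  have hp : 0 < p := (Fact.out : p.Prime).pos
  set t := PowerSeries.trunc (m+1) g with ht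
  have hdvd : (PowerSeries.X : PowerSeries (ZMod p))^(m+1) ∣ g - (t : PowerSeries (ZMod p)) := by
    rw [PowerSeries.X_pow_dvd_iff]
    intro i hi
    simp [map_sub, ht, Polynomial.coeff_coe, PowerSeries.coeff_trunc, hi]
  have h2 : (PowerSeries.X : PowerSeries (ZMod p))^(m+1) ∣ g^p - (t : PowerSeries (ZMod p))^p :=
    dvd_trans hdvd (sub_dvd_pow_sub_pow _ _ p)
  have h3 : PowerSeries.coeff m (g^p) =
      PowerSeries.coeff m ((t : PowerSeries (ZMod p))^p) := by
    have := (PowerSeries.X_pow_dvd_iff.mp h2) m (Nat.lt_succ_self m)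
    rw [map_sub, sub_eq_zero] at this
    exact this
  rw [h3, ← Polynomial.coe_pow, Polynomial.coeff_coe]
  have hexp : t ^ p = Polynomial.expand (ZMod p) p t := by
    have := Polynomial.map_frobenius_expand p t
    rw [ZMod.frobenius_zmod, Polynomial.map_id] at this
    exact this.symm
  rw [hexp, Polynomial.coeff_expand hp]
  split_ifs with h
  · rw [ht, PowerSeries.coeff_trunc]
    have : m / p < m + 1 := Nat.lt_succ_of_le (Nat.div_le_self m p)
    simp [this]
  · rfl

lemma p_dvd_iff_toZMod {p : ℕ} [Fact p.Prime] (x : ℤ_[p]) :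
    (p : ℤ_[p]) ∣ x ↔ PadicInt.toZMod x = 0 := by
  rw [← Ideal.mem_span_singleton, ← PadicInt.maximalIdeal_eq_span_p, ← PadicInt.ker_toZMod,
    RingHom.mem_ker]

/-- Frobenius step: if `A` is supported on multiples of `p^n`, then every coefficient of
`A^p` at an index not divisible by `p^(n+1)` is divisible by `p`. -/
lemma frob_step {p : ℕ} [Fact p.Prime] {n : ℕ} {A : PowerSeries ℤ_[p]}
    (hA : ∀ a, ¬ p ^ n ∣ a → PowerSeries.coeff a A = 0)
    {m : ℕ} (hm : ¬ p ^ (n+1) ∣ m) :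
    (p : ℤ_[p]) ∣ PowerSeries.coeff m (A ^ p) := by
  rw [p_dvd_iff_toZMod]
  have hmap : PadicInt.toZMod (PowerSeries.coeff m (A ^ p)) =
      PowerSeries.coeff m ((PowerSeries.map (PadicInt.toZMod) A) ^ p) := by
    rw [← map_pow, PowerSeries.coeff_map]
  rw [hmap, coeff_pow_p_zmod]
  split_ifs with h
  · rw [PowerSeries.coeff_map]
    have : PowerSeries.coeff (m / p) A = 0 := by
      apply hA
      intro hdvd
      apply hm
      have : p ^ (n+1) ∣ p * (m / p) := by
        rw [pow_succ, mul_comm]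
        exact mul_dvd_mul_left p hdvd
      rwa [Nat.mul_div_cancel' h] at this
    rw [this, map_zero]
  · rfl

open PowerSeries Finset

variable {p : ℕ} [Fact p.Prime]

/-- coefficient at `m ≥ 1` divisible by `p^(s + (r - v_p m))`, zero constant term. -/
def Sg (p : ℕ) [Fact p.Prime] (s r : ℕ) (X : PowerSeries ℤ_[p]) : Prop :=
  PowerSeries.constantCoeff X = 0 ∧
    ∀ m : ℕ, 1 ≤ m → (p : ℤ_[p]) ^ (s + (r - padicValNat p m)) ∣ PowerSeries.coeff m X

lemma min_le_val_add {a b : ℕ} (ha : a ≠ 0) (hb : b ≠ 0) :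
    min (padicValNat p a) (padicValNat p b) ≤ padicValNat p (a + b) := by
  rw [← padicValNat_dvd_iff_le (by omega : a + b ≠ 0)]
  exact dvd_add
    (dvd_trans (pow_dvd_pow _ (min_le_left _ _)) (pow_padicValNat_dvd (p := p) (n := a)))
    (dvd_trans (pow_dvd_pow _ (min_le_right _ _)) (pow_padicValNat_dvd (p := p) (n := b)))

lemma val_add_ineq {r a b : ℕ} (ha : 1 ≤ a) (hb : 1 ≤ b) :
    r - padicValNat p (a + b) ≤ (r - padicValNat p a) + (r - padicValNat p b) := by
  have := min_le_val_add (p := p) (by omega : a ≠ 0) (by omega : b ≠ 0)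
  omega

lemma Sg.mul {s s' r : ℕ} {X Y : PowerSeries ℤ_[p]} (hX : Sg p s r X) (hY : Sg p s' r Y) :
    Sg p (s + s') r (X * Y) := by
  obtain ⟨hX0, hX1⟩ := hX
  obtain ⟨hY0, hY1⟩ := hY
  constructor
  · simp [map_mul, hX0, hY0]
  · intro m hm
    rw [PowerSeries.coeff_mul]
    refine Finset.dvd_sum fun ab hab => ?_
    replace hab : ab.1 + ab.2 = m := by simpa using hab
    rcases Nat.eq_zero_or_pos ab.1 with h1 | h1
    · have : PowerSeries.coeff ab.1 X = 0 := by
        rw [h1, PowerSeries.coeff_zero_eq_constantCoeff]; exact hX0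
      simp [this]
    rcases Nat.eq_zero_or_pos ab.2 with h2 | h2
    · have : PowerSeries.coeff ab.2 Y = 0 := by
        rw [h2, PowerSeries.coeff_zero_eq_constantCoeff]; exact hY0
      simp [this]
    have hv : r - padicValNat p m ≤ (r - padicValNat p ab.1) + (r - padicValNat p ab.2) := by
      rw [← hab]; exact val_add_ineq h1 h2
    calc (p : ℤ_[p]) ^ (s + s' + (r - padicValNat p m))
        ∣ (p : ℤ_[p]) ^ ((s + (r - padicValNat p ab.1)) + (s' + (r - padicValNat p ab.2))) :=
          pow_dvd_pow _ (by omega)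
      _ ∣ _ := by
          rw [pow_add]
          exact mul_dvd_mul (hX1 _ h1) (hY1 _ h2)

lemma Sg.pow {s r : ℕ} {X : PowerSeries ℤ_[p]} (hX : Sg p s r X) :
    ∀ k, 1 ≤ k → Sg p (k * s) r (X ^ k)
  | 1, _ => by simpa using hX
  | (k+2), _ => by
      have := (Sg.pow hX (k+1) (by omega)).mul hX
      rw [pow_succ]
      have he : (k+2) * s = (k+1) * s + s := by ring
      rw [he]
      exact this

lemma Sg.mono {s s' r r' : ℕ} {X : PowerSeries ℤ_[p]} (hX : Sg p s r X)
    (hs : s' ≤ s) (hr : r' ≤ r) : Sg p s' r' X := by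
  refine ⟨hX.1, fun m hm => dvd_trans (pow_dvd_pow _ (by omega)) (hX.2 m hm)⟩

lemma supp_pow {d : ℕ} {A : PowerSeries ℤ_[p]}
    (hA : ∀ a, ¬ d ∣ a → PowerSeries.coeff a A = 0) :
    ∀ k m, ¬ d ∣ m → PowerSeries.coeff m (A ^ k) = 0
  | 0, m, hm => by
      have : m ≠ 0 := fun h => hm (h ▸ dvd_zero d)
      simp [PowerSeries.coeff_one, this]
  | (k+1), m, hm => by
      rw [pow_succ, PowerSeries.coeff_mul]
      refine Finset.sum_eq_zero fun ab hab => ?_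
      replace hab : ab.1 + ab.2 = m := by simpa using hab
      rcases Classical.em (d ∣ ab.1) with h1 | h1
      · rcases Classical.em (d ∣ ab.2) with h2 | h2
        · exact absurd (hab ▸ dvd_add h1 h2) hm
        · rw [hA _ h2, mul_zero]
      · rw [supp_pow hA k _ h1, zero_mul]

lemma Sg.pow_p {n : ℕ} {H : PowerSeries ℤ_[p]} (hH : Sg p 0 n H) :
    Sg p 0 (n+1) (H ^ p) := by
  have hp2 : 2 ≤ p := (Fact.out : p.Prime).two_le
  set A : PowerSeries ℤ_[p] :=
    PowerSeries.mk (fun a => if p ^ n ∣ a then PowerSeries.coeff a H else 0) with hAdef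
  set C : PowerSeries ℤ_[p] := H - A with hCdef
  have hcoeffA : ∀ a, PowerSeries.coeff a A =
      if p ^ n ∣ a then PowerSeries.coeff a H else 0 := fun a => by
    rw [hAdef, PowerSeries.coeff_mk]
  have hAsupp : ∀ a, ¬ p ^ n ∣ a → PowerSeries.coeff a A = 0 := fun a ha => by
    rw [hcoeffA, if_neg ha]
  have hcoeffC : ∀ a, PowerSeries.coeff a C =
      if p ^ n ∣ a then 0 else PowerSeries.coeff a H := fun a => by
    rw [hCdef, map_sub, hcoeffA]
    split_ifs <;> ring
  have hA0 : PowerSeries.constantCoeff A = 0 := by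
    rw [← PowerSeries.coeff_zero_eq_constantCoeff, hcoeffA, if_pos (dvd_zero _),
      PowerSeries.coeff_zero_eq_constantCoeff]
    exact hH.1
  have hA : Sg p 0 (n - 1) A := by
    refine ⟨hA0, fun m hm => ?_⟩
    rcases Classical.em (p ^ n ∣ m) with h | h
    · have hv : n ≤ padicValNat p m := (padicValNat_dvd_iff_le (by omega)).1 h
      have : 0 + (n - 1 - padicValNat p m) = 0 := by omega
      rw [this, pow_zero]
      exact one_dvd _
    · rw [hAsupp _ h]
      exact dvd_zero _
  have hC : Sg p 1 (n - 1) C := by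
    constructor
    · rw [← PowerSeries.coeff_zero_eq_constantCoeff, hcoeffC, if_pos (dvd_zero _)]
    · intro m hm
      rw [hcoeffC]
      split_ifs with h
      · exact dvd_zero _
      · have hv : ¬ n ≤ padicValNat p m := fun hle =>
          h ((padicValNat_dvd_iff_le (by omega)).2 hle)
        have he : 1 + (n - 1 - padicValNat p m) = 0 + (n - padicValNat p m) := by omega
        rw [he]
        exact hH.2 m hm
  have hAC : A + C = H := by rw [hCdef]; ring
  constructor
  · rw [map_pow, hH.1, zero_pow (by omega : p ≠ 0)]
  · intro m hm
    rw [← hAC, add_pow]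
    rw [map_sum]
    refine Finset.dvd_sum fun k hk => ?_
    rw [Finset.mem_range] at hk
    have hterm : PowerSeries.coeff m
          (A ^ k * C ^ (p - k) * ((Nat.choose p k : ℕ) : PowerSeries ℤ_[p])) =
        PowerSeries.coeff m (A ^ k * C ^ (p - k)) * (Nat.choose p k : ℤ_[p]) := by
      rw [← map_natCast (PowerSeries.C (R := ℤ_[p])) (Nat.choose p k), PowerSeries.coeff_mul_C]
    rw [hterm]
    set v := padicValNat p m with hv
    rcases Classical.em (k = p) with hkp | hkp
    · -- the A^p term
      rw [hkp]
      have h0 : A ^ p * C ^ (p - p) = A ^ p := by simp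
      rw [h0, Nat.choose_self, Nat.cast_one, mul_one]
      rcases Classical.em (p ^ (n+1) ∣ m) with h1 | h1
      · have : n + 1 ≤ v := (padicValNat_dvd_iff_le (by omega)).1 h1
        have he : 0 + (n + 1 - v) = 0 := by omega
        rw [he, pow_zero]; exact one_dvd _
      rcases Classical.em (p ^ n ∣ m) with h2 | h2
      · have hvn : n ≤ v := (padicValNat_dvd_iff_le (by omega)).1 h2
        have hvn1 : ¬ (n + 1 ≤ v) := fun hle => h1 ((padicValNat_dvd_iff_le (by omega)).2 hle)
        have he : 0 + (n + 1 - v) = 1 := by omega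
        rw [he, pow_one]
        exact frob_step hAsupp h1
      · rw [supp_pow hAsupp p m h2]
        exact dvd_zero _
    · -- k < p, so C-exponent p - k ≥ 1
      have hklt : k < p := by omega
      have hCpow : Sg p (p - k) (n - 1) (C ^ (p - k)) := by
        have := hC.pow (p - k) (by omega)
        simpa [mul_one] using this
      have hprod : Sg p (p - k) (n - 1) (A ^ k * C ^ (p - k)) := by
        rcases Nat.eq_zero_or_pos k with hk0 | hk0
        · subst hk0; simpa using hCpow
        · have hApow : Sg p 0 (n - 1) (A ^ k) := by
            have := hA.pow k hk0
            simpa using this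
          have := hApow.mul hCpow
          simpa using this
      have hdvd1 : (p : ℤ_[p]) ^ (p - k + (n - 1 - v)) ∣
          PowerSeries.coeff m (A ^ k * C ^ (p - k)) := by
        have := hprod.2 m hm
        rwa [← hv] at this
      rcases Nat.eq_zero_or_pos k with hk0 | hk0
      · -- k = 0 : exponent p ≥ 2
        refine dvd_trans (pow_dvd_pow _ ?_) (Dvd.dvd.mul_right hdvd1 _)
        omega
      · -- 1 ≤ k < p : extra factor from the binomial coefficient
        have hchoose : (p : ℤ_[p]) ∣ (Nat.choose p k : ℤ_[p]) := by
          exact_mod_cast Nat.cast_dvd_cast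
            ((Fact.out : p.Prime).dvd_choose_self (by omega) hklt)
        have h2 : (p : ℤ_[p]) ^ (p - k + (n - 1 - v) + 1) ∣
            PowerSeries.coeff m (A ^ k * C ^ (p - k)) * (Nat.choose p k : ℤ_[p]) := by
          rw [pow_succ]
          exact mul_dvd_mul hdvd1 hchoose
        exact dvd_trans (pow_dvd_pow _ (by omega)) h2

lemma Sg.comp {n : ℕ} {F H : PowerSeries ℤ_[p]}
    (hF0 : PowerSeries.constantCoeff F = 0)
    (hF1 : ∀ m : ℕ, ¬ p ∣ m → (p : ℤ_[p]) ∣ PowerSeries.coeff m F)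
    (hH : Sg p 0 n H) : Sg p 0 (n+1) (PScomp p F H) := by
  constructor
  · rw [← PowerSeries.coeff_zero_eq_constantCoeff, PScomp, PowerSeries.coeff_mk]
    simp [PowerSeries.coeff_zero_eq_constantCoeff, hF0]
  · intro m hm
    rw [PScomp, PowerSeries.coeff_mk]
    refine Finset.dvd_sum fun k hk => ?_
    rcases Nat.eq_zero_or_pos k with hk0 | hk0
    · rw [hk0, PowerSeries.coeff_zero_eq_constantCoeff, hF0, zero_mul]
      exact dvd_zero _
    rcases Classical.em (p ∣ k) with hpk | hpk
    · -- p ∣ k : use H^p ∈ Sg p 0 (n+1)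
      obtain ⟨k', hk'⟩ := hpk
      have hk'pos : 1 ≤ k' := by
        rcases Nat.eq_zero_or_pos k' with h | h
        · rw [h, mul_zero] at hk'; omega
        · exact h
      have hpow : Sg p 0 (n+1) (H ^ k) := by
        rw [hk', pow_mul]
        have := (hH.pow_p).pow k' hk'pos
        simpa using this
      exact Dvd.dvd.mul_left (hpow.2 m hm) _
    · -- p ∤ k : p divides coeff k F
      have h1 : (p : ℤ_[p]) ∣ PowerSeries.coeff k F := hF1 k hpk
      have h2 : (p : ℤ_[p]) ^ (0 + (n - padicValNat p m)) ∣
          PowerSeries.coeff m (H ^ k) := by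
        have := hH.pow k hk0
        exact (by simpa using this : Sg p 0 n (H ^ k)).2 m hm
      refine dvd_trans (pow_dvd_pow _ (by omega :
        0 + (n + 1 - padicValNat p m) ≤ 1 + (0 + (n - padicValNat p m)))) ?_
      rw [pow_add, pow_one]
      exact mul_dvd_mul h1 h2


theorem stmt16 (p : ℕ) [Fact p.Prime] (ν : ℕ) (hν : 1 ≤ ν) (F : PowerSeries ℤ_[p])
    (hF0 : PowerSeries.constantCoeff F = 0)
    (hF1 : ∀ m : ℕ, ¬ p ∣ m → (p : ℤ_[p]) ∣ PowerSeries.coeff m F) :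
    ∀ m : ℕ, 1 ≤ m →
      (p : ℤ_[p]) ^ (ν - padicValNat p m) ∣
        PowerSeries.coeff m (iterComp p F ν) := by
  have haux : ∀ n : ℕ, Sg p 0 n (iterComp p F n) := by
    intro n
    induction n with
    | zero =>
        constructor
        · simp [iterComp]
        · intro m hm
          simp
    | succ n ih =>
        exact Sg.comp hF0 hF1 ih
  intro m hm
  have := (haux ν).2 m hm
  simpa using this
end

section
/- Fix an odd prime p and N ≥ 1. In the N-variable δ-polynomial ring B over ℤ_p with variable families y_i^{(j)} (1 ≤ i ≤ N, j ≥ 0), for every n ≥ 1 the element δ^n(y₁ + y₂ + … + y_N) − (y₁^{(n)} + y₂^{(n)} + … + y_N^{(n)}) lies in M², where M is the ideal of B generated by all the variables y_i^{(j)}; i.e. the difference is a polynomial in the y_i^{(j)} with no constant term and no linear terms. -/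
open MvPolynomial Pointwise

/-- Key binomial lemma: in a domain where `p ≠ 0`, the defect of additivity of `δ`
lands in `M ^ 2` whenever both arguments are in `M`. -/
lemma stmt18_key {R : Type*} [CommRing R] [IsDomain R] {p : ℕ} (hp : p.Prime)
    (hp0 : (p : R) ≠ 0) (M : Ideal R) (δ : R → R)
    (hadd : ∀ a b, (p : R) * (δ (a + b) - δ a - δ b) = a ^ p + b ^ p - (a + b) ^ p)
    {a b : R} (ha : a ∈ M) (hb : b ∈ M) : δ (a + b) - δ a - δ b ∈ M ^ 2 := by
  classical
  have hp2 : 2 ≤ p := hp.two_le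
  set w : R := ∑ k ∈ Finset.Ioo 0 p, a ^ k * b ^ (p - k) * ((p.choose k / p : ℕ) : R) with hw
  have hmem : ∀ k ∈ Finset.Ioo 0 p,
      a ^ k * b ^ (p - k) * ((p.choose k / p : ℕ) : R) ∈ M ^ 2 := by
    intro k hk
    rw [Finset.mem_Ioo] at hk
    obtain ⟨k', rfl⟩ : ∃ k', k = k' + 1 := ⟨k - 1, by omega⟩
    obtain ⟨m', hm'⟩ : ∃ m', p - (k' + 1) = m' + 1 := ⟨p - k' - 2, by omega⟩
    have h1 : a ^ (k' + 1) ∈ M := by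
      rw [pow_succ]; exact M.mul_mem_left _ ha
    have h2 : b ^ (p - (k' + 1)) ∈ M := by
      rw [hm', pow_succ]; exact M.mul_mem_left _ hb
    have : a ^ (k' + 1) * b ^ (p - (k' + 1)) ∈ M ^ 2 := by
      rw [sq]; exact Ideal.mul_mem_mul h1 h2
    exact Ideal.mul_mem_right _ _ this
  have hwmem : w ∈ M ^ 2 := Ideal.sum_mem _ hmem
  have hsplit : Finset.range (p + 1) = insert 0 (insert p (Finset.Ioo 0 p)) := by
    ext k
    simp only [Finset.mem_range, Finset.mem_insert, Finset.mem_Ioo]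
    omega
  have hpw : (p : R) * w = (a + b) ^ p - a ^ p - b ^ p := by
    have hexp := add_pow a b p
    rw [hsplit, Finset.sum_insert (by simp only [Finset.mem_insert, Finset.mem_Ioo]; omega),
      Finset.sum_insert (by simp only [Finset.mem_Ioo]; omega)] at hexp
    simp only [pow_zero, Nat.sub_zero, Nat.choose_zero_right, Nat.choose_self, Nat.cast_one,
      one_mul, mul_one, Nat.sub_self] at hexp
    rw [hw, Finset.mul_sum]
    have hterm : ∀ k ∈ Finset.Ioo 0 p,
        (p : R) * (a ^ k * b ^ (p - k) * ((p.choose k / p : ℕ) : R))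
          = a ^ k * b ^ (p - k) * ((p.choose k : ℕ) : R) := by
      intro k hk
      rw [Finset.mem_Ioo] at hk
      have hdvd : p ∣ p.choose k := hp.dvd_choose_self hk.1.ne' hk.2
      have hcast : ((p : ℕ) : R) * ((p.choose k / p : ℕ) : R) = ((p.choose k : ℕ) : R) := by
        rw [← Nat.cast_mul, Nat.mul_div_cancel' hdvd]
      linear_combination (a ^ k * b ^ (p - k)) * hcast
    rw [Finset.sum_congr rfl hterm]
    rw [hexp]; ring
  have hcancel : (p : R) * (δ (a + b) - δ a - δ b) = (p : R) * (-w) := by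
    rw [hadd, mul_neg, hpw]; ring
  have := mul_left_cancel₀ hp0 hcancel
  rw [this]
  exact neg_mem hwmem

theorem stmt18 (p : ℕ) [Fact p.Prime] (hodd : Odd p) (N : ℕ) (hN : 1 ≤ N)
    (δ : MvPolynomial (Fin N × ℕ) ℤ_[p] → MvPolynomial (Fin N × ℕ) ℤ_[p])
    (hadd : ∀ a b, (p : MvPolynomial (Fin N × ℕ) ℤ_[p]) * (δ (a + b) - δ a - δ b)
      = a ^ p + b ^ p - (a + b) ^ p)
    (hmul : ∀ a b, δ (a * b) = a ^ p * δ b + b ^ p * δ a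
      + (p : MvPolynomial (Fin N × ℕ) ℤ_[p]) * δ a * δ b)
    (hX : ∀ (i : Fin N) (j : ℕ), δ (X (i, j)) = X (i, j + 1))
    (hC : ∀ c : ℤ_[p], (p : MvPolynomial (Fin N × ℕ) ℤ_[p]) * δ (C c) = C (c - c ^ p))
    (n : ℕ) (hn : 1 ≤ n) :
    δ^[n] (∑ i : Fin N, X (i, (0 : ℕ))) - ∑ i : Fin N, X (i, n) ∈
      (Ideal.span (Set.range (X : Fin N × ℕ → MvPolynomial (Fin N × ℕ) ℤ_[p]))) ^ 2 := by
  classical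
  have hp : p.Prime := Fact.out
  have hp2 : 2 ≤ p := hp.two_le
  set M : Ideal (MvPolynomial (Fin N × ℕ) ℤ_[p]) :=
    Ideal.span (Set.range (X : Fin N × ℕ → MvPolynomial (Fin N × ℕ) ℤ_[p])) with hM
  have hp0 : (p : MvPolynomial (Fin N × ℕ) ℤ_[p]) ≠ 0 := by
    have : (p : MvPolynomial (Fin N × ℕ) ℤ_[p]) = C (p : ℤ_[p]) := by
      simp
    rw [this]
    intro h
    have : ((p : ℤ_[p])) = 0 := by
      exact (MvPolynomial.C_eq_zero).mp h
    exact (Nat.cast_ne_zero.mpr hp.ne_zero) this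
  have hXM : ∀ u : Fin N × ℕ, (X u : MvPolynomial (Fin N × ℕ) ℤ_[p]) ∈ M :=
    fun u => Ideal.subset_span ⟨u, rfl⟩
  have key : ∀ a b : MvPolynomial (Fin N × ℕ) ℤ_[p],
      a ∈ M → b ∈ M → δ (a + b) - δ a - δ b ∈ M ^ 2 :=
    fun a b ha hb => stmt18_key hp hp0 M δ hadd ha hb
  have hM2M : M ^ 2 ≤ M := Ideal.pow_le_self two_ne_zero
  have hδ0 : δ 0 = 0 := by
    have h := hC 0
    rw [map_zero, zero_pow hp.ne_zero, sub_zero, map_zero] at h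
    exact (mul_eq_zero.mp h).resolve_left hp0
  have hδM2 : ∀ m ∈ M ^ 2, δ m ∈ M ^ 2 := by
    have hM2 : (M ^ 2 : Ideal (MvPolynomial (Fin N × ℕ) ℤ_[p]))
        = Ideal.span (Set.range (X : Fin N × ℕ → MvPolynomial (Fin N × ℕ) ℤ_[p]) *
          Set.range (X : Fin N × ℕ → MvPolynomial (Fin N × ℕ) ℤ_[p])) := by
      rw [sq, hM, Ideal.span_mul_span']
    intro m hm
    rw [hM2] at hm
    refine Submodule.span_induction ?_ ?_ ?_ ?_ hm
    · rintro x ⟨x₁, ⟨u, rfl⟩, x₂, ⟨v, rfl⟩, rfl⟩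
      rw [hmul]
      obtain ⟨i, j⟩ := u
      obtain ⟨k, l⟩ := v
      rw [hX, hX]
      have hXp : ∀ w : Fin N × ℕ,
          ((X w : MvPolynomial (Fin N × ℕ) ℤ_[p])) ^ p ∈ M ^ 2 :=
        fun w => Ideal.pow_le_pow_right hp2 (Ideal.pow_mem_pow (hXM w) p)
      refine add_mem (add_mem ?_ ?_) ?_
      · exact Ideal.mul_mem_right _ _ (hXp _)
      · exact Ideal.mul_mem_right _ _ (hXp _)
      · rw [mul_assoc]
        exact Ideal.mul_mem_left _ _ (by rw [sq]; exact Ideal.mul_mem_mul (hXM _) (hXM _))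
    · rw [hδ0]; exact zero_mem _
    · intro x y hx hy ihx ihy
      have hx' : x ∈ M ^ 2 := by rw [hM2]; exact hx
      have hy' : y ∈ M ^ 2 := by rw [hM2]; exact hy
      have h := key x y (hM2M hx') (hM2M hy')
      have heq : δ (x + y) = (δ (x + y) - δ x - δ y) + δ x + δ y := by ring
      rw [heq]
      exact add_mem (add_mem h ihx) ihy
    · intro r x hx ihx
      have hx' : x ∈ M ^ 2 := by rw [hM2]; exact hx
      rw [smul_eq_mul, hmul]
      refine add_mem (add_mem ?_ ?_) ?_
      · exact Ideal.mul_mem_left _ _ ihx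
      · have : x ^ p ∈ M ^ 2 :=
          Ideal.pow_le_pow_right hp2 (Ideal.pow_mem_pow (hM2M hx') p)
        exact Ideal.mul_mem_right _ _ this
      · rw [mul_assoc]
        exact Ideal.mul_mem_left _ _ (Ideal.mul_mem_left _ _ ihx)
  have hsumM : ∀ (m : ℕ) (s : Finset (Fin N)),
      (∑ i ∈ s, (X (i, m) : MvPolynomial (Fin N × ℕ) ℤ_[p])) ∈ M :=
    fun m s => Ideal.sum_mem _ fun i _ => hXM _
  have hδsum : ∀ (m : ℕ) (s : Finset (Fin N)),
      δ (∑ i ∈ s, (X (i, m) : MvPolynomial (Fin N × ℕ) ℤ_[p]))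
        - ∑ i ∈ s, (X (i, m + 1) : MvPolynomial (Fin N × ℕ) ℤ_[p]) ∈ M ^ 2 := by
    intro m s
    induction s using Finset.induction with
    | empty =>
      simp only [Finset.sum_empty]
      rw [hδ0, sub_zero]
      exact zero_mem _
    | @insert a s hns ih =>
      rw [Finset.sum_insert hns, Finset.sum_insert hns]
      have h := key (X (a, m)) (∑ i ∈ s, (X (i, m) : MvPolynomial (Fin N × ℕ) ℤ_[p]))
        (hXM _) (hsumM m s)
      have heq : δ (X (a, m) + ∑ i ∈ s, (X (i, m) : MvPolynomial (Fin N × ℕ) ℤ_[p]))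
            - (X (a, m + 1) + ∑ i ∈ s, (X (i, m + 1) : MvPolynomial (Fin N × ℕ) ℤ_[p]))
          = (δ (X (a, m) + ∑ i ∈ s, (X (i, m) : MvPolynomial (Fin N × ℕ) ℤ_[p]))
              - δ (X (a, m)) - δ (∑ i ∈ s, (X (i, m) : MvPolynomial (Fin N × ℕ) ℤ_[p])))
            + (δ (∑ i ∈ s, (X (i, m) : MvPolynomial (Fin N × ℕ) ℤ_[p]))
              - ∑ i ∈ s, (X (i, m + 1) : MvPolynomial (Fin N × ℕ) ℤ_[p]))
            + (δ (X (a, m)) - X (a, m + 1)) := by ring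
      rw [heq]
      rw [hX a m] at h ⊢
      rw [sub_self, add_zero]
      exact add_mem h ih
  have main : ∀ k : ℕ,
      δ^[k] (∑ i : Fin N, (X (i, (0 : ℕ)) : MvPolynomial (Fin N × ℕ) ℤ_[p]))
        - ∑ i : Fin N, (X (i, k) : MvPolynomial (Fin N × ℕ) ℤ_[p]) ∈ M ^ 2 := by
    intro k
    induction k with
    | zero => simp
    | succ k ih =>
      rw [Function.iterate_succ_apply']
      set S := ∑ i : Fin N, (X (i, k) : MvPolynomial (Fin N × ℕ) ℤ_[p]) with hS
      set m := δ^[k] (∑ i : Fin N, (X (i, (0 : ℕ)) : MvPolynomial (Fin N × ℕ) ℤ_[p])) - S with hm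
      have hiter : δ^[k] (∑ i : Fin N, (X (i, (0 : ℕ)) : MvPolynomial (Fin N × ℕ) ℤ_[p]))
          = S + m := by rw [hm]; ring
      rw [hiter]
      have h1 := key S m (hsumM k Finset.univ) (hM2M ih)
      have h2 := hδM2 m ih
      have h3 := hδsum k Finset.univ
      have heq : δ (S + m) - ∑ i : Fin N, (X (i, k + 1) : MvPolynomial (Fin N × ℕ) ℤ_[p])
          = (δ (S + m) - δ S - δ m)
            + (δ S - ∑ i : Fin N, (X (i, k + 1) : MvPolynomial (Fin N × ℕ) ℤ_[p])) + δ m := by ring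
      rw [heq]
      exact add_mem (add_mem h1 h3) h2
  exact main n
end
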